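/- Let q be a product of finitely many affine-linear functions on ℂ^n, each of the form λ ↦ ⟨λ,α⟩ − c with α ∈ ℝ^n \ {0}, c ∈ ℂ. Suppose F is a closed subspace of the Fréchet space H_R(ℂ^n) (with seminorms ν_{R,m}) and φ ↦ qφ maps F into H_R(ℂ^n). Then for every m there is a constant C_m > 0 such that ν_{R,m}(φ) ≤ C_m ν_{R,m}(qφ) for all entire functions φ on ℂ^n; i.e., division by such a polynomial q is continuous in the Paley–Wiener norms. -/

import Mathlib

/-!
For a single affine factor `ℓ = L - c` with `L v ≠ 0`, the bound is trivial where `‖ℓ‖ ≥ 1`.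
Elsewhere, along the complex line `t ↦ z + t • v` the factor is `ℓ z + t L v`, so `‖ℓ‖ ≥ 1` on the
circle `‖t‖ = 2 / ‖L v‖`, and the maximum modulus principle carries the bound from that circle to
`z`, losing only the factor by which the weight can change under a translation of bounded length.
A product of such factors is then divided out one factor at a time.
-/

open scoped BigOperators

noncomputable def rePart (n : ℕ) (z : EuclideanSpace ℂ (Fin n)) : EuclideanSpace ℝ (Fin n) :=
  (WithLp.equiv 2 ((i : Fin n) → ℝ)).symm fun i => (z i).re

open Metric

section Weights

variable {E : Type*} [SeminormedAddCommGroup E]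

def IsTranslationModerate (w : E → ℝ) : Prop :=
  ∀ ρ : ℝ, ∃ K : ℝ, ∀ z u : E, ‖u‖ ≤ ρ → w z ≤ K * w (z + u)

theorem IsTranslationModerate.mul {f g : E → ℝ} (hf : IsTranslationModerate f)
    (hg : IsTranslationModerate g) (hf₀ : ∀ z, 0 ≤ f z) (hg₀ : ∀ z, 0 ≤ g z) :
    IsTranslationModerate fun z => f z * g z := by
  intro ρ
  obtain ⟨K₁, hK₁⟩ := hf ρ
  obtain ⟨K₂, hK₂⟩ := hg ρ
  refine ⟨K₁ * K₂, fun z u hu => ?_⟩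
  calc f z * g z ≤ K₁ * f (z + u) * (K₂ * g (z + u)) :=
        mul_le_mul (hK₁ z u hu) (hK₂ z u hu) (hg₀ z) ((hf₀ z).trans (hK₁ z u hu))
    _ = K₁ * K₂ * (f (z + u) * g (z + u)) := by ring

theorem isTranslationModerate_one_add_norm_pow (m : ℕ) :
    IsTranslationModerate fun z : E => (1 + ‖z‖) ^ m := by
  refine fun ρ => ⟨(1 + ρ) ^ m, fun z u hu => ?_⟩
  dsimp only
  have hz : ‖z‖ ≤ ‖z + u‖ + ρ := by
    calc ‖z‖ = ‖(z + u) - u‖ := by rw [add_sub_cancel_right]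
      _ ≤ ‖z + u‖ + ‖u‖ := norm_sub_le _ _
      _ ≤ ‖z + u‖ + ρ := by gcongr
  have hρ : 0 ≤ ρ := (norm_nonneg u).trans hu
  rw [← mul_pow]
  gcongr
  nlinarith [norm_nonneg (z + u)]

theorem isTranslationModerate_exp_mul {g : E → ℝ} {L : NNReal} (hg : LipschitzWith L g) (R : ℝ) :
    IsTranslationModerate fun z => Real.exp (R * g z) := by
  refine fun ρ => ⟨Real.exp (|R| * (L * ρ)), fun z u hu => ?_⟩
  have hdist : |g z - g (z + u)| ≤ L * ρ := by
    rw [← Real.dist_eq]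
    exact hg.dist_le_mul_of_le (by rwa [dist_self_add_right])
  rw [← Real.exp_add, Real.exp_le_exp]
  have := (le_abs_self _).trans_eq (abs_mul R (g z - g (z + u)))
  nlinarith [mul_le_mul_of_nonneg_left hdist (abs_nonneg R)]

end Weights

section Division

variable {E : Type*} [NormedAddCommGroup E] [NormedSpace ℂ E]

/-- `sup w ‖ψ‖ ≤ C sup w ‖f ψ‖` for entire `ψ`, phrased through upper bounds `B` of the right side. -/
def HasDivisionBound (w : E → ℝ) (f : E → ℂ) : Prop :=
  ∃ C : ℝ, 0 < C ∧ ∀ ψ : E → ℂ, Differentiable ℂ ψ → ∀ B : ℝ,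
    (∀ z, w z * ‖f z * ψ z‖ ≤ B) → ∀ z, w z * ‖ψ z‖ ≤ C * B

theorem hasDivisionBound_one (w : E → ℝ) : HasDivisionBound w fun _ => 1 :=
  ⟨1, one_pos, fun ψ _ B hB z => by simpa using hB z⟩

theorem HasDivisionBound.mul {w : E → ℝ} {f g : E → ℂ} (hf : HasDivisionBound w f)
    (hf' : Differentiable ℂ f) (hg : HasDivisionBound w g) :
    HasDivisionBound w fun z => f z * g z := by
  obtain ⟨C₁, hC₁, hf⟩ := hf
  obtain ⟨C₂, hC₂, hg⟩ := hg
  refine ⟨C₁ * C₂, by positivity, fun ψ hψ B hB z => ?_⟩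
  have hfψ := hg (fun z => f z * ψ z) (hf'.mul hψ) B fun z => by
    simpa only [mul_comm (f z), mul_assoc] using hB z
  simpa only [mul_assoc] using hf ψ hψ (C₂ * B) hfψ z

theorem HasDivisionBound.list_prod {ι : Type*} {w : E → ℝ} {F : ι → E → ℂ} (l : List ι)
    (hF : ∀ i ∈ l, Differentiable ℂ (F i) ∧ HasDivisionBound w (F i)) :
    HasDivisionBound w fun z => (l.map fun i => F i z).prod := by
  induction l with
  | nil => simpa using hasDivisionBound_one w
  | cons i l ih =>
    obtain ⟨hi', hi⟩ := hF i List.mem_cons_self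
    simpa only [List.map_cons, List.prod_cons] using
      hi.mul hi' (ih fun j hj => hF j (List.mem_cons_of_mem i hj))

theorem hasDivisionBound_sub_const {F : Type*} [FunLike F E ℂ] [LinearMapClass F ℂ E ℂ]
    {w : E → ℝ} (hw₀ : ∀ z, 0 < w z) (hw : IsTranslationModerate w) {L : F}
    (hL : ∃ v, L v ≠ 0) (c : ℂ) :
    HasDivisionBound w fun z => L z - c := by
  obtain ⟨v, hv⟩ := hL
  set r := 2 / ‖L v‖
  have hr : 0 < r := by positivity
  obtain ⟨K, hK⟩ := hw (r * ‖v‖)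
  have hK₁ : 1 ≤ K :=
    le_of_mul_le_mul_right (by simpa using hK 0 0 (by rw [norm_zero]; positivity)) (hw₀ 0)
  refine ⟨K, by linarith, fun ψ hψ B hB z => ?_⟩
  have hfar : ∀ z, 1 ≤ ‖L z - c‖ → w z * ‖ψ z‖ ≤ B := fun z hz =>
    calc w z * ‖ψ z‖ ≤ w z * ‖(L z - c) * ψ z‖ :=
          mul_le_mul_of_nonneg_left (by rw [norm_mul]; exact le_mul_of_one_le_left (norm_nonneg _) hz)
            (hw₀ z).le
      _ ≤ B := hB z
  have hB₀ : 0 ≤ B := (mul_nonneg (hw₀ z).le (norm_nonneg _)).trans (hB z)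
  rcases le_or_gt 1 ‖L z - c‖ with hz | hz
  · exact (hfar z hz).trans (le_mul_of_one_le_left hB₀ hK₁)
  have hcircle : ∀ t : ℂ, ‖t‖ = r → w z * ‖ψ (z + t • v)‖ ≤ K * B := fun t ht => by
    have hfar' : 1 ≤ ‖L (z + t • v) - c‖ := by
      have htv : ‖t * L v‖ = 2 := by
        rw [norm_mul, ht, div_mul_cancel₀ _ (norm_ne_zero_iff.mpr hv)]
      have := norm_sub_le (L z - c + t * L v) (L z - c)
      rw [add_sub_cancel_left, htv] at this
      rw [map_add, map_smul, smul_eq_mul, add_sub_right_comm]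
      linarith
    calc w z * ‖ψ (z + t • v)‖ ≤ K * w (z + t • v) * ‖ψ (z + t • v)‖ := by
          gcongr
          exact hK z _ (by rw [norm_smul, ht])
      _ ≤ K * B := by
          rw [mul_assoc]; exact mul_le_mul_of_nonneg_left (hfar _ hfar') (by linarith)
  have hline : Differentiable ℂ fun t : ℂ => (w z : ℂ) * ψ (z + t • v) :=
    (differentiable_const _).mul (hψ.comp ((differentiable_id.smul_const v).const_add z))
  have hmax := Complex.norm_le_of_forall_mem_frontier_norm_le (isBounded_ball (x := 0) (r := r))
    hline.diffContOnCl (C := K * B) (fun t ht => by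
      rw [frontier_ball 0 hr.ne', mem_sphere_zero_iff_norm] at ht
      simpa [norm_mul, abs_of_pos (hw₀ z)] using hcircle t ht)
    (subset_closure (mem_ball_self hr))
  simpa only [zero_smul, add_zero, norm_mul, Complex.norm_real, Real.norm_eq_abs,
    abs_of_pos (hw₀ z)] using hmax

end Division

section EuclideanSpace

variable {n : ℕ}

theorem norm_rePart_le (z : EuclideanSpace ℂ (Fin n)) : ‖rePart n z‖ ≤ ‖z‖ := by
  rw [EuclideanSpace.norm_eq, EuclideanSpace.norm_eq]
  gcongr with i
  exact Complex.abs_re_le_norm (z i)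

theorem lipschitzWith_rePart : LipschitzWith 1 (rePart n) :=
  LipschitzWith.mk_one fun z z' => by
    have : rePart n z - rePart n z' = rePart n (z - z') := by ext i; simp [rePart]
    simpa [dist_eq_norm, this] using norm_rePart_le (z - z')

noncomputable def realPairing (α : Fin n → ℝ) : EuclideanSpace ℂ (Fin n) →L[ℂ] ℂ :=
  ∑ i, (α i : ℂ) • EuclideanSpace.proj i

theorem realPairing_apply (α : Fin n → ℝ) (z : EuclideanSpace ℂ (Fin n)) :
    realPairing α z = ∑ i, z i * (α i : ℂ) := by
  simp [realPairing, mul_comm]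

theorem exists_realPairing_ne_zero {α : Fin n → ℝ} (hα : α ≠ 0) :
    ∃ v, realPairing α v ≠ 0 := by
  obtain ⟨i, hi⟩ := Function.ne_iff.mp hα
  exact ⟨EuclideanSpace.single i 1, by simpa [realPairing_apply] using hi⟩

end EuclideanSpace

theorem stmt11_general (n : ℕ) (R : ℝ)
    (factors : List ((Fin n → ℝ) × ℂ)) (hfac : ∀ p ∈ factors, p.1 ≠ 0)
    (q : EuclideanSpace ℂ (Fin n) → ℂ)
    (hq : ∀ z, q z = (factors.map fun p => (∑ i, z i * (p.1 i : ℂ)) - p.2).prod)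
    (m : ℕ) :
    ∃ C : ℝ, 0 < C ∧ ∀ φ : EuclideanSpace ℂ (Fin n) → ℂ, Differentiable ℂ φ →
      ∀ B : ℝ,
        (∀ z, (1 + ‖z‖) ^ m * Real.exp (-R * ‖rePart n z‖) * ‖q z * φ z‖ ≤ B) →
        ∀ z, (1 + ‖z‖) ^ m * Real.exp (-R * ‖rePart n z‖) * ‖φ z‖ ≤ C * B := by
  let w : EuclideanSpace ℂ (Fin n) → ℝ := fun z => (1 + ‖z‖) ^ m * Real.exp (-R * ‖rePart n z‖)
  have hw₀ : ∀ z, 0 < w z := fun z => by positivity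
  have hw : IsTranslationModerate w :=
    (isTranslationModerate_one_add_norm_pow m).mul
      (isTranslationModerate_exp_mul (lipschitzWith_one_norm.comp lipschitzWith_rePart) (-R))
      (fun _ => by positivity) (fun _ => (Real.exp_pos _).le)
  have hfactor : ∀ p ∈ factors, Differentiable ℂ (fun z => realPairing p.1 z - p.2) ∧
      HasDivisionBound w (fun z => realPairing p.1 z - p.2) := fun p hp =>
    ⟨(realPairing p.1).differentiable.sub_const _,
      hasDivisionBound_sub_const hw₀ hw (exists_realPairing_ne_zero (hfac p hp)) p.2⟩
  obtain ⟨C, hC, hdiv⟩ := HasDivisionBound.list_prod factors hfactor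
  exact ⟨C, hC, fun φ hφ B hB => hdiv φ hφ B fun z => by
    simpa only [realPairing_apply, ← hq] using hB z⟩

/-- Division by a polynomial `q` which is a product of affine-linear factors
`λ ↦ ⟨λ,α⟩ - c` (`α ∈ ℝⁿ \ {0}`, `c ∈ ℂ`) is continuous in the Paley–Wiener norms:
for every `m` there is `C_m > 0` with `ν_{R,m}(φ) ≤ C_m ν_{R,m}(qφ)` for all entire `φ`
(the inequality being interpreted via an arbitrary upper bound `B` for the right-hand side,
so it holds trivially when the right-hand side is infinite). -/
theorem stmt11 (n : ℕ) (R : ℝ) (hR : 0 < R)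
    (factors : List ((Fin n → ℝ) × ℂ)) (hfac : ∀ p ∈ factors, p.1 ≠ 0)
    (q : EuclideanSpace ℂ (Fin n) → ℂ)
    (hq : ∀ z, q z = (factors.map fun p => (∑ i, z i * (p.1 i : ℂ)) - p.2).prod)
    (m : ℕ) :
    ∃ C : ℝ, 0 < C ∧ ∀ φ : EuclideanSpace ℂ (Fin n) → ℂ, Differentiable ℂ φ →
      ∀ B : ℝ,
        (∀ z, (1 + ‖z‖) ^ m * Real.exp (-R * ‖rePart n z‖) * ‖q z * φ z‖ ≤ B) →
        ∀ z, (1 + ‖z‖) ^ m * Real.exp (-R * ‖rePart n z‖) * ‖φ z‖ ≤ C * B :=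
  stmt11_general n R factors hfac q hq m
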